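/- arXiv:2601.11953 — 4 statements merged into one kernel-verified Lean document; each statement's English description precedes it below -/
import Mathlib

section
/- For arbitrary policies π' and π in a finite CMDP, J_C^{EI}(π') − J_C^{EI}(π) ≤ (1/(1-γ)) E_{s∼d^π, a∼π'}[A_C^{EI}(s,a|π) + (2γ ε^{EI}_{π'}/(1-γ)) D_TV(π'‖π)[s]], where ε^{EI}_{π'} = max_s |E_{a∼π'}[A_C^{EI}(s,a|π)]| and D_TV(π'‖π)[s] = (1/2)∑_a |π'(a|s) − π(a|s)|. -/
/-!
For any `V` and any solution `e` of the flow equation of a policy `μ`, a telescoping swap of sums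
gives `∑ e Ā_μ = ∑ e c_μ - (1 - γ) ⟨ρ, V⟩`, where `Ā_μ` is the `μ`-average of the advantage
relative to `V`. The Bellman equation makes `Ā_π = 0`, so the cost difference is `⟨d', Ā_π'⟩`.
Replacing `d'` by `d` costs at most `ε ‖d' - d‖₁` (Hölder), and subtracting the two flow
equations and using that `P` is an `ℓ¹`-contraction gives
`(1 - γ) ‖d' - d‖₁ ≤ γ 𝔼_{s ∼ d} ‖π' s - π s‖₁ = 2 γ 𝔼_{s ∼ d} D_TV(π' ‖ π)[s]`.
-/

open Finset

namespace CMDP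

variable {S A : Type*} [Fintype S] [Fintype A]

-- The fixed-point equation `e = (1 - γ) ρ + γ e P_μ` of `e = (1 - γ) ∑ₜ γᵗ Pr(sₜ = ·)`.
def IsDiscountedVisitation (γ : ℝ) (ρ : S → ℝ) (P : S → A → S → ℝ) (μ : S → A → ℝ)
    (e : S → ℝ) : Prop :=
  ∀ t, e t - γ * ∑ s, ∑ a, e s * μ s a * P s a t = (1 - γ) * ρ t

def advantage (γ : ℝ) (P : S → A → S → ℝ) (C : S → A → S → ℝ) (V : S → ℝ) (s : S) (a : A) : ℝ :=
  ∑ s', P s a s' * (C s a s' + γ * V s' - V s)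

section Advantage

variable {γ : ℝ} {P : S → A → S → ℝ} (C : S → A → S → ℝ) (V : S → ℝ)

theorem sum_mul_advantage (hP1 : ∀ s a, ∑ s', P s a s' = 1) {μ : S → A → ℝ}
    {s : S} (hμ1 : ∑ a, μ s a = 1) :
    ∑ a, μ s a * advantage γ P C V s a
      = ∑ a, μ s a * ∑ s', P s a s' * (C s a s' + γ * V s') - V s := by
  simp only [advantage, sub_eq_add_neg _ (V s), mul_add, sum_add_distrib, ← sum_mul,
    hP1, one_mul, hμ1]

theorem sum_mul_advantage_eq_zero {π : S → A → ℝ} (hP1 : ∀ s a, ∑ s', P s a s' = 1)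
    (hπ1 : ∀ s, ∑ a, π s a = 1)
    (hV : ∀ s, V s = ∑ a, π s a * ∑ s', P s a s' * (C s a s' + γ * V s')) (s : S) :
    ∑ a, π s a * advantage γ P C V s a = 0 := by
  rw [sum_mul_advantage C V hP1 (hπ1 s), ← hV, sub_self]

theorem sum_visitation_mul_advantage {ρ : S → ℝ} {μ : S → A → ℝ} {e : S → ℝ}
    (hP1 : ∀ s a, ∑ s', P s a s' = 1) (hμ1 : ∀ s, ∑ a, μ s a = 1)
    (he : IsDiscountedVisitation γ ρ P μ e) :
    ∑ s, e s * ∑ a, μ s a * advantage γ P C V s a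
      = ∑ s, e s * ∑ a, μ s a * ∑ s', P s a s' * C s a s' - (1 - γ) * ∑ t, ρ t * V t := by
  have hnext : ∑ s, e s * ∑ a, μ s a * ∑ s', P s a s' * V s'
      = ∑ t, (∑ s, ∑ a, e s * μ s a * P s a t) * V t := by
    simp only [mul_sum, sum_mul]
    conv_rhs => rw [sum_comm]
    refine sum_congr rfl fun s _ => ?_
    rw [sum_comm]
    exact sum_congr rfl fun _ _ => sum_congr rfl fun _ _ => by ring
  have hflow : ∑ t, e t * V t - γ * ∑ t, (∑ s, ∑ a, e s * μ s a * P s a t) * V t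
      = (1 - γ) * ∑ t, ρ t * V t := by
    simp only [mul_sum, ← sum_sub_distrib]
    exact sum_congr rfl fun t _ => by linear_combination V t * he t
  have hsplit : ∑ s, e s * ∑ a, μ s a * ∑ s', P s a s' * (C s a s' + γ * V s')
      = ∑ s, e s * ∑ a, μ s a * ∑ s', P s a s' * C s a s'
        + γ * ∑ s, e s * ∑ a, μ s a * ∑ s', P s a s' * V s' := by
    simp only [mul_add, sum_add_distrib, mul_sum]
    congr 1
    exact sum_congr rfl fun _ _ => sum_congr rfl fun _ _ => sum_congr rfl fun _ _ => by ring
  simp only [sum_mul_advantage C V hP1 (hμ1 _), mul_sub, sum_sub_distrib]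
  rw [hsplit, hnext]
  linarith

theorem sum_visitation_sub_sum_visitation {ρ : S → ℝ} {π π' : S → A → ℝ} {d d' : S → ℝ}
    (hP1 : ∀ s a, ∑ s', P s a s' = 1) (hπ1 : ∀ s, ∑ a, π s a = 1)
    (hπ'1 : ∀ s, ∑ a, π' s a = 1)
    (hV : ∀ s, V s = ∑ a, π s a * ∑ s', P s a s' * (C s a s' + γ * V s'))
    (hd : IsDiscountedVisitation γ ρ P π d) (hd' : IsDiscountedVisitation γ ρ P π' d') :
    ∑ s, d' s * ∑ a, π' s a * ∑ s', P s a s' * C s a s'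
        - ∑ s, d s * ∑ a, π s a * ∑ s', P s a s' * C s a s'
      = ∑ s, d' s * ∑ a, π' s a * advantage γ P C V s a := by
  have h := sum_visitation_mul_advantage C V hP1 hπ1 hd
  simp only [sum_mul_advantage_eq_zero C V hP1 hπ1 hV, mul_zero, sum_const_zero] at h
  linarith [sum_visitation_mul_advantage C V hP1 hπ'1 hd']

end Advantage

theorem sum_sub_mul_le_iSup_abs_mul (e e' f : S → ℝ) :
    ∑ s, e' s * f s - ∑ s, e s * f s ≤ (⨆ s, |f s|) * ∑ s, |e' s - e s| := by
  have hbdd : BddAbove (Set.range fun s => |f s|) := (Set.finite_range _).bddAbove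
  rw [← sum_sub_distrib, mul_sum]
  refine sum_le_sum fun s _ => ?_
  calc e' s * f s - e s * f s = (e' s - e s) * f s := by ring
    _ ≤ |e' s - e s| * |f s| := by rw [← abs_mul]; exact le_abs_self _
    _ ≤ |e' s - e s| * ⨆ s, |f s| := by gcongr; exact le_ciSup hbdd s
    _ = _ := mul_comm _ _

theorem sum_abs_sum_mul_le {P : S → A → S → ℝ} (hP0 : ∀ s a s', 0 ≤ P s a s')
    (hP1 : ∀ s a, ∑ s', P s a s' = 1) (x : S → A → ℝ) :
    ∑ t, |∑ s, ∑ a, x s a * P s a t| ≤ ∑ s, ∑ a, |x s a| := by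
  calc ∑ t, |∑ s, ∑ a, x s a * P s a t| ≤ ∑ t, ∑ s, ∑ a, |x s a| * P s a t := by
        gcongr with t
        refine (abs_sum_le_sum_abs _ _).trans (sum_le_sum fun s _ => ?_)
        refine (abs_sum_le_sum_abs _ _).trans (sum_le_sum fun a _ => ?_)
        rw [abs_mul, abs_of_nonneg (hP0 s a t)]
    _ = ∑ s, ∑ a, |x s a| * ∑ t, P s a t := by
        simp only [mul_sum]
        rw [sum_comm]
        exact sum_congr rfl fun s _ => sum_comm
    _ = ∑ s, ∑ a, |x s a| := by simp only [hP1, mul_one]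

theorem one_sub_mul_sum_abs_sub_le {γ : ℝ} (hγ0 : 0 ≤ γ) {ρ : S → ℝ} {P : S → A → S → ℝ}
    (hP0 : ∀ s a s', 0 ≤ P s a s') (hP1 : ∀ s a, ∑ s', P s a s' = 1)
    {μ μ' : S → A → ℝ} (hμ'0 : ∀ s a, 0 ≤ μ' s a) (hμ'1 : ∀ s, ∑ a, μ' s a = 1)
    {e e' : S → ℝ} (he0 : ∀ s, 0 ≤ e s)
    (he : IsDiscountedVisitation γ ρ P μ e) (he' : IsDiscountedVisitation γ ρ P μ' e') :
    (1 - γ) * ∑ t, |e' t - e t| ≤ γ * ∑ s, e s * ∑ a, |μ' s a - μ s a| := by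
  set x : S → A → ℝ := fun s a => e' s * μ' s a - e s * μ s a
  have hdiff : ∀ t, e' t - e t = γ * ∑ s, ∑ a, x s a * P s a t := by
    intro t
    have := he t
    have := he' t
    simp only [x, sub_mul, sum_sub_distrib, mul_sub]
    linarith
  have hx : ∀ s a, |x s a| ≤ |e' s - e s| * μ' s a + e s * |μ' s a - μ s a| := by
    intro s a
    calc |x s a| = |(e' s - e s) * μ' s a + e s * (μ' s a - μ s a)| := by congr 1; ring
      _ ≤ _ := by
        refine (abs_add_le _ _).trans ?_
        rw [abs_mul, abs_mul, abs_of_nonneg (hμ'0 s a), abs_of_nonneg (he0 s)]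
  have hcontract : ∑ t, |e' t - e t|
      ≤ γ * (∑ t, |e' t - e t| + ∑ s, e s * ∑ a, |μ' s a - μ s a|) := by
    calc ∑ t, |e' t - e t| = γ * ∑ t, |∑ s, ∑ a, x s a * P s a t| := by
          rw [mul_sum]
          exact sum_congr rfl fun t _ => by rw [hdiff, abs_mul, abs_of_nonneg hγ0]
      _ ≤ γ * ∑ s, ∑ a, |x s a| := mul_le_mul_of_nonneg_left (sum_abs_sum_mul_le hP0 hP1 x) hγ0
      _ ≤ γ * ∑ s, ∑ a, (|e' s - e s| * μ' s a + e s * |μ' s a - μ s a|) := by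
          gcongr; exact hx _ _
      _ = _ := by simp only [sum_add_distrib, ← mul_sum, hμ'1, mul_one]
  linarith

end CMDP

open CMDP in
theorem stmt_10_general {S A : Type*} [Fintype S] [Fintype A]
    (γ : ℝ) (hγ0 : 0 < γ) (hγ1 : γ < 1)
    (ρ : S → ℝ)
    (P : S → A → S → ℝ) (hP0 : ∀ s a s', 0 ≤ P s a s')
    (hP1 : ∀ s a, ∑ s', P s a s' = 1)
    (π π' : S → A → ℝ)
    (hπ1 : ∀ s, ∑ a, π s a = 1)
    (hπ'0 : ∀ s a, 0 ≤ π' s a) (hπ'1 : ∀ s, ∑ a, π' s a = 1)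
    -- extrinsic-intrinsic cost C^{EI} = c^E + β c^I
    (C : S → A → S → ℝ)
    -- V is the extrinsic-intrinsic cost value function of π
    (V : S → ℝ)
    (hV : ∀ s, V s = ∑ a, π s a * ∑ s', P s a s' * (C s a s' + γ * V s'))
    -- discounted visitation distributions of π and π'
    (d d' : S → ℝ) (hd0 : ∀ s, 0 ≤ d s)
    (hd : ∀ t, d t - γ * ∑ s, ∑ a, d s * π s a * P s a t = (1 - γ) * ρ t)
    (hd' : ∀ t, d' t - γ * ∑ s, ∑ a, d' s * π' s a * P s a t
      = (1 - γ) * ρ t) :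
    (1 / (1 - γ)) * (∑ s, d' s * ∑ a, π' s a * ∑ s', P s a s' * C s a s')
        - (1 / (1 - γ)) * (∑ s, d s * ∑ a, π s a * ∑ s', P s a s' * C s a s')
      ≤ (1 / (1 - γ)) * ∑ s, d s * ∑ a, π' s a *
          ((∑ s', P s a s' * (C s a s' + γ * V s' - V s))
            + (2 * γ * (⨆ t : S, |∑ b, π' t b *
                ∑ s', P t b s' * (C t b s' + γ * V s' - V t)|) / (1 - γ))
              * ((1 / 2) * ∑ b, |π' s b - π s b|)) := by
  have h1γ : 0 < 1 - γ := sub_pos.mpr hγ1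
  set Ā : S → ℝ := fun s => ∑ a, π' s a * advantage γ P C V s a
  set ε := ⨆ t, |Ā t|
  set tv := ∑ s, d s * ∑ a, |π' s a - π s a|
  have htv : ∑ t, |d' t - d t| ≤ γ / (1 - γ) * tv := by
    rw [div_mul_eq_mul_div, le_div_iff₀ h1γ, mul_comm]
    exact one_sub_mul_sum_abs_sub_le hγ0.le hP0 hP1 hπ'0 hπ'1 hd0 hd hd'
  have hrhs : ∑ s, d s * ∑ a, π' s a * (advantage γ P C V s a
        + 2 * γ * ε / (1 - γ) * (1 / 2 * ∑ b, |π' s b - π s b|))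
      = ∑ s, d s * Ā s + ε * (γ / (1 - γ) * tv) := by
    have hmix : ∀ s (c : ℝ), ∑ a, π' s a * (advantage γ P C V s a + c) = Ā s + c := fun s c => by
      simp only [Ā, mul_add, sum_add_distrib, ← sum_mul, hπ'1, one_mul]
    simp only [hmix]
    simp only [mul_add, sum_add_distrib, tv, mul_sum]
    congr 1
    exact sum_congr rfl fun s _ => by field_simp
  rw [← mul_sub]
  refine mul_le_mul_of_nonneg_left ?_ (one_div_nonneg.mpr h1γ.le)
  calc _ = ∑ s, d' s * Ā s :=
        sum_visitation_sub_sum_visitation C V hP1 hπ1 hπ'1 hV hd hd'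
    _ ≤ ∑ s, d s * Ā s + ε * ∑ t, |d' t - d t| := by
        linarith [sum_sub_mul_le_iSup_abs_mul d d' Ā]
    _ ≤ ∑ s, d s * Ā s + ε * (γ / (1 - γ) * tv) := by
        gcongr
        exact Real.iSup_nonneg fun t => abs_nonneg _
    _ = _ := hrhs.symm

/-- Extrinsic-intrinsic constraint bound:
J_C^{EI}(π') − J_C^{EI}(π) ≤ (1/(1-γ)) E_{s∼d^π, a∼π'}[A_C^{EI}(s,a|π)
  + (2γ ε^{EI}_{π'}/(1-γ)) D_TV(π'‖π)[s]]. -/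
theorem stmt_10 {S A : Type*} [Fintype S] [Fintype A] [Nonempty S]
    (γ : ℝ) (hγ0 : 0 < γ) (hγ1 : γ < 1)
    (ρ : S → ℝ) (hρ0 : ∀ s, 0 ≤ ρ s) (hρ1 : ∑ s, ρ s = 1)
    (P : S → A → S → ℝ) (hP0 : ∀ s a s', 0 ≤ P s a s')
    (hP1 : ∀ s a, ∑ s', P s a s' = 1)
    (π π' : S → A → ℝ)
    (hπ0 : ∀ s a, 0 ≤ π s a) (hπ1 : ∀ s, ∑ a, π s a = 1)
    (hπ'0 : ∀ s a, 0 ≤ π' s a) (hπ'1 : ∀ s, ∑ a, π' s a = 1)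
    -- extrinsic-intrinsic cost C^{EI} = c^E + β c^I
    (C : S → A → S → ℝ)
    -- V is the extrinsic-intrinsic cost value function of π
    (V : S → ℝ)
    (hV : ∀ s, V s = ∑ a, π s a * ∑ s', P s a s' * (C s a s' + γ * V s'))
    -- discounted visitation distributions of π and π'
    (d d' : S → ℝ) (hd0 : ∀ s, 0 ≤ d s) (hd'0 : ∀ s, 0 ≤ d' s)
    (hd : ∀ t, d t - γ * ∑ s, ∑ a, d s * π s a * P s a t = (1 - γ) * ρ t)
    (hd' : ∀ t, d' t - γ * ∑ s, ∑ a, d' s * π' s a * P s a t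
      = (1 - γ) * ρ t) :
    (1 / (1 - γ)) * (∑ s, d' s * ∑ a, π' s a * ∑ s', P s a s' * C s a s')
        - (1 / (1 - γ)) * (∑ s, d s * ∑ a, π s a * ∑ s', P s a s' * C s a s')
      ≤ (1 / (1 - γ)) * ∑ s, d s * ∑ a, π' s a *
          ((∑ s', P s a s' * (C s a s' + γ * V s' - V s))
            + (2 * γ * (⨆ t : S, |∑ b, π' t b *
                ∑ s', P t b s' * (C t b s' + γ * V s' - V t)|) / (1 - γ))
              * ((1 / 2) * ∑ b, |π' s b - π s b|)) :=
  stmt_10_general γ hγ0 hγ1 ρ P hP0 hP1 π π' hπ1 hπ'0 hπ'1 C V hV d d' hd0 hd hd'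
end

section
/- For two policies π and π' in a finite MDP with discount γ ∈ (0,1), the discounted visitation distributions satisfy ‖d^{π'} − d^π‖₁ ≤ (2γ/(1-γ)) E_{s∼d^π}[D_TV(π'‖π)[s]], where D_TV(π'‖π)[s] = (1/2)∑_a |π'(a|s) − π(a|s)|. -/
/-!
Subtracting the two Bellman flow equations gives
`d' - d = γ · Pᵀ (d' π' - d π)`, and a row-stochastic kernel does not increase the `ℓ¹` norm.
Splitting `d' π' - d π = (d' - d) π' + d (π' - π)` then yields
`‖d' - d‖₁ ≤ γ (‖d' - d‖₁ + E_{d}[‖π' - π‖₁])`, which rearranges to the claim.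
-/

open Finset

theorem sum_abs_sum_mul_le_sum_abs {ι S : Type*} [Fintype ι] [Fintype S]
    (K : ι → S → ℝ) (hK0 : ∀ i t, 0 ≤ K i t) (hK1 : ∀ i, ∑ t, K i t = 1) (f : ι → ℝ) :
    ∑ t, |∑ i, f i * K i t| ≤ ∑ i, |f i| :=
  calc ∑ t, |∑ i, f i * K i t| ≤ ∑ t, ∑ i, |f i| * K i t := by
        gcongr with t
        refine (abs_sum_le_sum_abs _ _).trans_eq (sum_congr rfl fun i _ => ?_)
        rw [abs_mul, abs_of_nonneg (hK0 i t)]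
    _ = ∑ i, |f i| := by
        rw [sum_comm]
        simp_rw [← mul_sum, hK1, mul_one]

theorem sum_abs_mul_sub_mul_le {A : Type*} [Fintype A] {x x' : ℝ} (hx : 0 ≤ x)
    {p p' : A → ℝ} (hp'0 : ∀ a, 0 ≤ p' a) (hp'1 : ∑ a, p' a = 1) :
    ∑ a, |x' * p' a - x * p a| ≤ |x' - x| + x * ∑ a, |p' a - p a| :=
  calc ∑ a, |x' * p' a - x * p a|
      ≤ ∑ a, (|x' - x| * p' a + x * |p' a - p a|) := by
        gcongr with a
        calc |x' * p' a - x * p a| = |(x' - x) * p' a + x * (p' a - p a)| := by ring_nf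
          _ ≤ |(x' - x) * p' a| + |x * (p' a - p a)| := abs_add_le _ _
          _ = |x' - x| * p' a + x * |p' a - p a| := by
            rw [abs_mul, abs_mul, abs_of_nonneg (hp'0 a), abs_of_nonneg hx]
    _ = |x' - x| + x * ∑ a, |p' a - p a| := by
        rw [sum_add_distrib, ← mul_sum, ← mul_sum, hp'1, mul_one]

theorem stmt_11_general {S A : Type*} [Fintype S] [Fintype A]
    (γ : ℝ) (hγ0 : 0 < γ) (hγ1 : γ < 1)
    (ρ : S → ℝ)
    (P : S → A → S → ℝ) (hP0 : ∀ s a s', 0 ≤ P s a s')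
    (hP1 : ∀ s a, ∑ s', P s a s' = 1)
    (π π' : S → A → ℝ)
    (hπ'0 : ∀ s a, 0 ≤ π' s a) (hπ'1 : ∀ s, ∑ a, π' s a = 1)
    (d d' : S → ℝ) (hd0 : ∀ s, 0 ≤ d s)
    (hd : ∀ t, d t - γ * ∑ s, ∑ a, d s * π s a * P s a t = (1 - γ) * ρ t)
    (hd' : ∀ t, d' t - γ * ∑ s, ∑ a, d' s * π' s a * P s a t
      = (1 - γ) * ρ t) :
    ∑ s, |d' s - d s|
      ≤ (2 * γ / (1 - γ)) * ∑ s, d s * ((1 / 2) * ∑ a, |π' s a - π s a|) := by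
  set E := ∑ s, |d' s - d s|
  set T := ∑ s, d s * ∑ a, |π' s a - π s a|
  let f : S × A → ℝ := fun x => d' x.1 * π' x.1 x.2 - d x.1 * π x.1 x.2
  have hdiff : ∀ t, d' t - d t = γ * ∑ x, f x * P x.1 x.2 t := by
    intro t
    simp only [f, Fintype.sum_prod_type, sub_mul, sum_sub_distrib]
    linarith [hd t, hd' t]
  have hrec : E ≤ γ * (E + T) :=
    calc E = γ * ∑ t, |∑ x, f x * P x.1 x.2 t| := by
          simp_rw [E, hdiff, abs_mul, abs_of_pos hγ0, mul_sum]
      _ ≤ γ * ∑ x, |f x| := by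
          gcongr
          exact sum_abs_sum_mul_le_sum_abs _ (fun x => hP0 x.1 x.2) (fun x => hP1 x.1 x.2) f
      _ ≤ γ * ∑ s, (|d' s - d s| + d s * ∑ a, |π' s a - π s a|) := by
          rw [Fintype.sum_prod_type]
          gcongr with s
          exact sum_abs_mul_sub_mul_le (x' := d' s) (p := π s) (hd0 s) (hπ'0 s) (hπ'1 s)
      _ = γ * (E + T) := by rw [sum_add_distrib]
  have hT : ∑ s, d s * ((1 / 2) * ∑ a, |π' s a - π s a|) = T / 2 := by
    rw [sum_div]
    exact sum_congr rfl fun s _ => by ring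
  rw [hT, show 2 * γ / (1 - γ) * (T / 2) = γ * T / (1 - γ) by ring,
    le_div_iff₀ (by linarith)]
  linarith

/-- ‖d^{π'} − d^π‖₁ ≤ (2γ/(1-γ)) E_{s∼d^π}[D_TV(π'‖π)[s]]. -/
theorem stmt_11 {S A : Type*} [Fintype S] [Fintype A]
    (γ : ℝ) (hγ0 : 0 < γ) (hγ1 : γ < 1)
    (ρ : S → ℝ) (hρ0 : ∀ s, 0 ≤ ρ s) (hρ1 : ∑ s, ρ s = 1)
    (P : S → A → S → ℝ) (hP0 : ∀ s a s', 0 ≤ P s a s')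
    (hP1 : ∀ s a, ∑ s', P s a s' = 1)
    (π π' : S → A → ℝ)
    (hπ0 : ∀ s a, 0 ≤ π s a) (hπ1 : ∀ s, ∑ a, π s a = 1)
    (hπ'0 : ∀ s a, 0 ≤ π' s a) (hπ'1 : ∀ s, ∑ a, π' s a = 1)
    (d d' : S → ℝ) (hd0 : ∀ s, 0 ≤ d s) (hd'0 : ∀ s, 0 ≤ d' s)
    (hd : ∀ t, d t - γ * ∑ s, ∑ a, d s * π s a * P s a t = (1 - γ) * ρ t)
    (hd' : ∀ t, d' t - γ * ∑ s, ∑ a, d' s * π' s a * P s a t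
      = (1 - γ) * ρ t) :
    ∑ s, |d' s - d s|
      ≤ (2 * γ / (1 - γ)) * ∑ s, d s * ((1 / 2) * ∑ a, |π' s a - π s a|) :=
  stmt_11_general γ hγ0 hγ1 ρ P hP0 hP1 π π' hπ'0 hπ'1 d d' hd0 hd hd'
end

section
/- Let f : ℝⁿ → ℝᵐ be a linear map given by a random matrix whose entries are i.i.d. N(0, 1/m). For any fixed pair x, y ∈ ℝⁿ and any ε ∈ (0,1), the probability that (1-ε)‖x−y‖² ≤ ‖f(x)−f(y)‖² ≤ (1+ε)‖x−y‖² fails is at most 2 exp(−m(ε²/4 − ε³/6)). -/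
/-!
Write `c = x - y` and `Q = ‖M c‖²`. Each coordinate of `M c` is a sum of independent centred
Gaussians, hence `N(0, ‖c‖²/m)`, and distinct coordinates involve disjoint sets of entries, so `Q`
is `‖c‖²/m` times a χ² variable with `m` degrees of freedom:
`𝔼 exp (t Q) = (1 - 2 t ‖c‖²/m) ^ (-m/2)`. The Chernoff bound with the optimal `t` gives
`(√(1 + ε) e^{-ε/2}) ^ m` and `(√(1 - ε) e^{ε/2}) ^ m` for the two tails, and
`log (1 + ε) ≤ ε - ε²/2 + ε³/3`, `log (1 - ε) ≤ -ε - ε²/2` bound both by `exp (-m (ε²/4 - ε³/6))`.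
-/

open MeasureTheory ProbabilityTheory Real Measure
open scoped NNReal Matrix

namespace Real

lemma sqrt_eq_exp_log_div_two {a : ℝ} (ha : 0 < a) : √a = exp (log a / 2) := by
  rw [sqrt_eq_rpow, rpow_def_of_pos ha]
  ring_nf

lemma log_one_add_le {ε : ℝ} (hε : 0 ≤ ε) : log (1 + ε) ≤ ε - ε ^ 2 / 2 + ε ^ 3 / 3 := by
  have hp : 0 ≤ ε - ε ^ 2 / 2 + ε ^ 3 / 3 := by
    nlinarith [mul_nonneg hε (sq_nonneg (ε - 3 / 4))]
  -- with `p = ε - ε²/2 + ε³/3`, `1 + p + p²/2 + p³/6 - (1 + ε)` is `ε ^ 4` times this quintic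
  have hquintic :
      0 ≤ 5 / 24 + ε / 8 - 19 * ε ^ 2 / 144 + 7 * ε ^ 3 / 72 - ε ^ 4 / 36 + ε ^ 5 / 162 := by
    nlinarith [mul_nonneg hε (sq_nonneg (ε ^ 2 - 3 * ε)), sq_nonneg (ε ^ 2 - 3)]
  rw [log_le_iff_le_exp (by linarith)]
  calc 1 + ε ≤ ∑ i ∈ Finset.range 4, (ε - ε ^ 2 / 2 + ε ^ 3 / 3) ^ i / i.factorial := by
        simp only [Finset.sum_range_succ, Finset.sum_range_zero, Nat.factorial]
        nlinarith [mul_nonneg (pow_nonneg hε 4) hquintic]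
    _ ≤ exp (ε - ε ^ 2 / 2 + ε ^ 3 / 3) := sum_le_exp_of_nonneg hp 4

lemma log_one_sub_le {ε : ℝ} (hε0 : 0 ≤ ε) (hε1 : ε < 1) : log (1 - ε) ≤ -ε - ε ^ 2 / 2 := by
  have h := hasSum_pow_div_log_of_abs_lt_one (x := ε) (by rwa [abs_of_nonneg hε0])
  have := sum_le_hasSum (Finset.range 2) (fun n _ ↦ by positivity) h
  norm_num [Finset.sum_range_succ] at this
  linarith

lemma sqrt_one_add_mul_exp_le {ε : ℝ} (hε : 0 ≤ ε) :
    √(1 + ε) * exp (-(ε / 2)) ≤ exp (-(ε ^ 2 / 4 - ε ^ 3 / 6)) := by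
  rw [sqrt_eq_exp_log_div_two (by linarith), ← exp_add, exp_le_exp]
  linarith [log_one_add_le hε]

lemma sqrt_one_sub_mul_exp_le {ε : ℝ} (hε0 : 0 ≤ ε) (hε1 : ε < 1) :
    √(1 - ε) * exp (ε / 2) ≤ exp (-(ε ^ 2 / 4 - ε ^ 3 / 6)) := by
  rw [sqrt_eq_exp_log_div_two (by linarith), ← exp_add, exp_le_exp]
  nlinarith [log_one_sub_le hε0 hε1, pow_nonneg hε0 3]

end Real

namespace ProbabilityTheory

variable {Ω : Type*} [MeasurableSpace Ω] {μ : Measure Ω}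

lemma iIndepFun.curry {ι κ 𝓧 : Type*} [MeasurableSpace 𝓧] {X : ι × κ → Ω → 𝓧}
    (mX : ∀ p, Measurable (X p)) (h : iIndepFun X μ) :
    iIndepFun (fun i ω j ↦ X (i, j) ω) μ := by
  have := h.isProbabilityMeasure
  have : ∀ p, IsProbabilityMeasure (μ.map (X p)) :=
    fun p ↦ isProbabilityMeasure_map (mX p).aemeasurable
  have hall := h.map_fun_eq_infinitePi_map mX
  rw [iIndepFun_iff_map_fun_eq_infinitePi_map (by fun_prop)]
  have hcurry : (fun ω i j ↦ X (i, j) ω) = MeasurableEquiv.curry ι κ 𝓧 ∘ fun ω p ↦ X p ω := rfl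
  have hrow : ∀ i, μ.map (fun ω j ↦ X (i, j) ω) = infinitePi fun j ↦ μ.map (X (i, j)) := by
    intro i
    rw [show (fun ω j ↦ X (i, j) ω) = (fun f ↦ f i) ∘ fun ω i j ↦ X (i, j) ω from rfl,
      ← map_map (by fun_prop) (by fun_prop), hcurry, ← map_map (by fun_prop) (by fun_prop),
      hall, infinitePi_map_curry (fun i j ↦ μ.map (X (i, j))), infinitePi_map_eval]
  rw [hcurry, ← map_map (by fun_prop) (by fun_prop), hall,
    infinitePi_map_curry (fun i j ↦ μ.map (X (i, j)))]
  simp_rw [hrow]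

lemma iIndepFun.map_sum_eq_gaussianReal {ι : Type*} [Fintype ι] {X : ι → Ω → ℝ}
    (mX : ∀ i, AEMeasurable (X i) μ) (h : iIndepFun X μ) {m : ι → ℝ} {v : ι → ℝ≥0}
    (hX : ∀ i, μ.map (X i) = gaussianReal (m i) (v i)) :
    μ.map (fun ω ↦ ∑ i, X i ω) = gaussianReal (∑ i, m i) (∑ i, v i) := by
  have := h.isProbabilityMeasure
  refine Measure.ext_of_charFun (funext fun t ↦ ?_)
  simp only [h.charFun_map_fun_sum_eq_prod mX, Finset.prod_apply, hX, charFun_gaussianReal,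
    ← Complex.exp_sum]
  push_cast
  simp only [Finset.mul_sum, Finset.sum_mul, Finset.sum_div, Finset.sum_sub_distrib]

lemma mgf_sq_gaussianReal {v : ℝ≥0} {t : ℝ} (ht : 2 * t * v < 1) :
    mgf (· ^ 2) (gaussianReal 0 v) t = (√(1 - 2 * t * v))⁻¹ := by
  rcases eq_or_ne v 0 with rfl | hv
  · simp [mgf]
  have hpdf : ∀ x, gaussianPDFReal 0 v x • rexp (t * x ^ 2)
      = (√(2 * π * v))⁻¹ * rexp (-((1 - 2 * t * v) / (2 * v)) * x ^ 2) := by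
    intro x
    rw [gaussianPDFReal, smul_eq_mul, mul_assoc, ← Real.exp_add]
    congr 2
    field_simp
    ring
  rw [mgf, integral_gaussianReal_eq_integral_smul hv]
  simp_rw [hpdf]
  rw [integral_const_mul, integral_gaussian, ← Real.sqrt_inv, ← Real.sqrt_mul (by positivity)]
  field_simp
  rw [Real.sqrt_div' _ (by linarith), Real.sqrt_one]

section ChiSquaredTail

variable [IsProbabilityMeasure μ] {Q : Ω → ℝ} {k : ℕ} {σ2 : ℝ}

lemma measureReal_ge_le_of_mgf_eq (hσ : 0 < σ2)
    (hQ : ∀ t, 2 * t * σ2 < 1 → mgf Q μ t = (√(1 - 2 * t * σ2))⁻¹ ^ k) {ε : ℝ} (hε : 0 ≤ ε) :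
    μ.real {ω | (1 + ε) * (k * σ2) ≤ Q ω} ≤ (√(1 + ε) * exp (-(ε / 2))) ^ k := by
  set t := ε / (2 * σ2 * (1 + ε))
  have ht : 1 - 2 * t * σ2 = (1 + ε)⁻¹ := by simp only [t]; field_simp; ring
  have hmgf : mgf Q μ t = √(1 + ε) ^ k := by
    rw [hQ t (by linarith [inv_pos.2 (by linarith : (0 : ℝ) < 1 + ε)]), ht, sqrt_inv, inv_inv]
  have hint : Integrable (fun ω ↦ exp (t * Q ω)) μ := mgf_pos_iff.mp (hmgf ▸ by positivity)
  calc μ.real {ω | (1 + ε) * (k * σ2) ≤ Q ω}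
      ≤ exp (-t * ((1 + ε) * (k * σ2))) * mgf Q μ t :=
        measure_ge_le_exp_mul_mgf _ (by positivity) hint
    _ = (√(1 + ε) * exp (-(ε / 2))) ^ k := by
        rw [hmgf, mul_pow, ← exp_nat_mul, mul_comm]
        congr 2
        simp only [t]
        field_simp

lemma measureReal_le_le_of_mgf_eq (hσ : 0 < σ2)
    (hQ : ∀ t, 2 * t * σ2 < 1 → mgf Q μ t = (√(1 - 2 * t * σ2))⁻¹ ^ k) {ε : ℝ} (hε0 : 0 ≤ ε)
    (hε1 : ε < 1) :
    μ.real {ω | Q ω ≤ (1 - ε) * (k * σ2)} ≤ (√(1 - ε) * exp (ε / 2)) ^ k := by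
  set t := -(ε / (2 * σ2 * (1 - ε)))
  have hε : 1 - ε ≠ 0 := by linarith
  have ht : 1 - 2 * t * σ2 = (1 - ε)⁻¹ := by simp only [t]; field_simp; ring
  have hmgf : mgf Q μ t = √(1 - ε) ^ k := by
    rw [hQ t (by linarith [inv_pos.2 (by linarith : (0 : ℝ) < 1 - ε)]), ht, sqrt_inv, inv_inv]
  have hint : Integrable (fun ω ↦ exp (t * Q ω)) μ := by
    refine mgf_pos_iff.mp (hmgf ▸ pow_pos (sqrt_pos.2 ?_) k)
    linarith
  calc μ.real {ω | Q ω ≤ (1 - ε) * (k * σ2)}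
      ≤ exp (-t * ((1 - ε) * (k * σ2))) * mgf Q μ t :=
        measure_le_le_exp_mul_mgf _ (neg_nonpos.2 (by positivity)) hint
    _ = (√(1 - ε) * exp (ε / 2)) ^ k := by
        rw [hmgf, mul_pow, ← exp_nat_mul, mul_comm]
        congr 2
        simp only [t]
        field_simp

lemma measure_notMem_Icc_le_of_mgf_eq (hσ : 0 < σ2)
    (hQ : ∀ t, 2 * t * σ2 < 1 → mgf Q μ t = (√(1 - 2 * t * σ2))⁻¹ ^ k) {ε : ℝ} (hε0 : 0 ≤ ε)
    (hε1 : ε < 1) :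
    μ {ω | Q ω ∉ Set.Icc ((1 - ε) * (k * σ2)) ((1 + ε) * (k * σ2))}
      ≤ ENNReal.ofReal (2 * exp (-(k * (ε ^ 2 / 4 - ε ^ 3 / 6)))) := by
  have hpow : ∀ b, 0 ≤ b → b ≤ exp (-(ε ^ 2 / 4 - ε ^ 3 / 6)) →
      b ^ k ≤ exp (-(k * (ε ^ 2 / 4 - ε ^ 3 / 6))) := fun b hb hbε ↦ by
    rw [← mul_neg, exp_nat_mul]
    exact pow_le_pow_left₀ hb hbε k
  have hupper := (measureReal_ge_le_of_mgf_eq hσ hQ hε0).trans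
    (hpow _ (by positivity) (sqrt_one_add_mul_exp_le hε0))
  have hlower := (measureReal_le_le_of_mgf_eq hσ hQ hε0 hε1).trans
    (hpow _ (by positivity) (sqrt_one_sub_mul_exp_le hε0 hε1))
  have hsplit : {ω | Q ω ∉ Set.Icc ((1 - ε) * (k * σ2)) ((1 + ε) * (k * σ2))}
      ⊆ {ω | (1 + ε) * (k * σ2) ≤ Q ω} ∪ {ω | Q ω ≤ (1 - ε) * (k * σ2)} := by
    intro ω hω
    simp only [Set.mem_ofPred_eq, Set.mem_Icc, not_and_or, not_le] at hω
    rcases hω with h | h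
    exacts [Or.inr h.le, Or.inl h.le]
  calc μ {ω | Q ω ∉ Set.Icc ((1 - ε) * (k * σ2)) ((1 + ε) * (k * σ2))}
      ≤ μ {ω | (1 + ε) * (k * σ2) ≤ Q ω} + μ {ω | Q ω ≤ (1 - ε) * (k * σ2)} :=
        (measure_mono hsplit).trans (measure_union_le _ _)
    _ = ENNReal.ofReal (μ.real {ω | (1 + ε) * (k * σ2) ≤ Q ω}
          + μ.real {ω | Q ω ≤ (1 - ε) * (k * σ2)}) := by
        rw [ENNReal.ofReal_add measureReal_nonneg measureReal_nonneg, ofReal_measureReal,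
          ofReal_measureReal]
    _ ≤ ENNReal.ofReal (2 * exp (-(k * (ε ^ 2 / 4 - ε ^ 3 / 6)))) :=
        ENNReal.ofReal_le_ofReal (by linarith)

end ChiSquaredTail

section GaussianMatrix

variable {ι κ : Type*} [Fintype κ] {M : Ω → Matrix ι κ ℝ} {v : ℝ≥0}

lemma map_mulVec_apply_eq_gaussianReal (hmeas : ∀ i j, Measurable (fun ω ↦ M ω i j))
    (hindep : iIndepFun (fun (p : ι × κ) ω ↦ M ω p.1 p.2) μ)
    (hgauss : ∀ i j, μ.map (fun ω ↦ M ω i j) = gaussianReal 0 v) (c : κ → ℝ) (i : ι) :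
    μ.map (fun ω ↦ (M ω *ᵥ c) i) = gaussianReal 0 (∑ j, .mk (c j ^ 2) (sq_nonneg _) * v) := by
  have hrow : iIndepFun (fun j ω ↦ M ω i j * c j) μ :=
    (hindep.precomp (Prod.mk_right_injective i)).comp (fun j x ↦ x * c j)
      fun j ↦ measurable_mul_const _
  have hentry : ∀ j, μ.map (fun ω ↦ M ω i j * c j)
      = gaussianReal 0 (.mk (c j ^ 2) (sq_nonneg _) * v) := by
    intro j
    rw [show (fun ω ↦ M ω i j * c j) = (· * c j) ∘ fun ω ↦ M ω i j from rfl,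
      ← map_map (measurable_mul_const _) (hmeas i j), hgauss, gaussianReal_map_mul_const,
      mul_zero]
  simpa [Matrix.mulVec, dotProduct] using
    hrow.map_sum_eq_gaussianReal (fun j ↦ ((hmeas i j).mul_const _).aemeasurable) hentry

lemma mgf_sum_sq_mulVec [Fintype ι] (hmeas : ∀ i j, Measurable (fun ω ↦ M ω i j))
    (hindep : iIndepFun (fun (p : ι × κ) ω ↦ M ω p.1 p.2) μ)
    (hgauss : ∀ i j, μ.map (fun ω ↦ M ω i j) = gaussianReal 0 v) (c : κ → ℝ) {t : ℝ}
    (ht : 2 * t * (v * ∑ j, c j ^ 2) < 1) :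
    mgf (fun ω ↦ ∑ i, (M ω *ᵥ c) i ^ 2) μ t
      = (√(1 - 2 * t * (v * ∑ j, c j ^ 2)))⁻¹ ^ Fintype.card ι := by
  have hmv : ∀ i, Measurable (fun ω ↦ (M ω *ᵥ c) i) := fun i ↦
    Finset.measurable_sum _ fun j _ ↦ (hmeas i j).mul_const _
  have hsq : iIndepFun (fun i ω ↦ (M ω *ᵥ c) i ^ 2) μ :=
    (hindep.curry fun p ↦ hmeas p.1 p.2).comp (fun _ r ↦ (∑ j, r j * c j) ^ 2)
      fun _ ↦ by fun_prop
  have hvar : ((∑ j, .mk (c j ^ 2) (sq_nonneg _) * v : ℝ≥0) : ℝ) = v * ∑ j, c j ^ 2 := by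
    push_cast
    rw [Finset.mul_sum]
    simp [mul_comm]
  have hrow : ∀ i, mgf (fun ω ↦ (M ω *ᵥ c) i ^ 2) μ t
      = (√(1 - 2 * t * (v * ∑ j, c j ^ 2)))⁻¹ := by
    intro i
    rw [← hvar, ← mgf_sq_gaussianReal (hvar ▸ ht),
      ← map_mulVec_apply_eq_gaussianReal hmeas hindep hgauss,
      mgf_map (hmv i).aemeasurable (by fun_prop)]
    rfl
  rw [show (fun ω ↦ ∑ i, (M ω *ᵥ c) i ^ 2) = ∑ i, fun ω ↦ (M ω *ᵥ c) i ^ 2 by ext; simp,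
    hsq.mgf_sum (fun i ↦ (hmv i).pow_const 2), Finset.prod_congr rfl fun i _ ↦ hrow i,
    Finset.prod_const, Finset.card_univ]

end GaussianMatrix

end ProbabilityTheory

/-- Distributional Johnson–Lindenstrauss: for a random m×n matrix with
i.i.d. N(0,1/m) entries, the squared distance ‖f(x)−f(y)‖² of a fixed pair
is (1±ε)-preserved except with probability at most 2 exp(−m(ε²/4 − ε³/6)). -/
theorem stmt_18 {Ω : Type*} [MeasurableSpace Ω]
    (μ : Measure Ω) [IsProbabilityMeasure μ]
    (m n : ℕ) (hm : 0 < m)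
    (M : Ω → Matrix (Fin m) (Fin n) ℝ)
    (hmeas : ∀ i j, Measurable (fun ω => M ω i j))
    (hindep : iIndepFun
      (fun (p : Fin m × Fin n) ω => M ω p.1 p.2) μ)
    (hgauss : ∀ i j, Measure.map (fun ω => M ω i j) μ
      = gaussianReal 0 (1 / (m : NNReal)))
    (x y : Fin n → ℝ) (ε : ℝ) (hε0 : 0 < ε) (hε1 : ε < 1) :
    μ {ω | ¬ ((1 - ε) * ∑ j, (x j - y j) ^ 2
              ≤ ∑ i, ((M ω).mulVec (x - y) i) ^ 2 ∧
            ∑ i, ((M ω).mulVec (x - y) i) ^ 2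
              ≤ (1 + ε) * ∑ j, (x j - y j) ^ 2)}
      ≤ ENNReal.ofReal (2 * Real.exp (-(m * (ε ^ 2 / 4 - ε ^ 3 / 6)))) := by
  set c := x - y
  set Q : Ω → ℝ := fun ω ↦ ∑ i, (M ω *ᵥ c) i ^ 2
  set S := ∑ j, c j ^ 2
  change μ {ω | ¬ ((1 - ε) * S ≤ Q ω ∧ Q ω ≤ (1 + ε) * S)} ≤ _
  rcases (Finset.sum_nonneg fun j _ ↦ sq_nonneg (c j)).eq_or_lt with hS | hS
  · have hc : c = 0 := funext fun j ↦ by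
      simpa using (Finset.sum_eq_zero_iff_of_nonneg fun j _ ↦ sq_nonneg (c j)).1 hS.symm j
        (Finset.mem_univ j)
    simp [Q, hc, show S = 0 from hS.symm]
  set σ2 : ℝ := ((1 / m : ℝ≥0) : ℝ) * S
  have hσ : 0 < σ2 := mul_pos (by positivity) hS
  have hmσ : (m : ℝ) * σ2 = S := by simp [σ2]; field_simp
  have hQ : ∀ t, 2 * t * σ2 < 1 → mgf Q μ t = (√(1 - 2 * t * σ2))⁻¹ ^ m := fun t ht ↦ by
    simpa only [Fintype.card_fin] using mgf_sum_sq_mulVec hmeas hindep hgauss c ht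
  rw [← hmσ]
  exact measure_notMem_Icc_le_of_mgf_eq hσ hQ hε0.le hε1
end

section
/- In a finite MDP, for arbitrary policies π and π', the performance difference identity holds: J_R(π') − J_R(π) = (1/(1-γ)) E_{s∼d^{π'}, a∼π'}[A_R^π(s,a)], where A_R^π(s,a) = Q_R^π(s,a) − V_R^π(s) is the advantage function. -/
/-!
Write `Δ = V' - V`. Since `V'` is the fixed point of the Bellman equation of `π'` and `Q` is the
one-step look-ahead of `V`, the `π'`-average of the advantage at `s` is the Bellman residual
`Δ s - γ (P^{π'} Δ) s`. Weighting by the visitation distribution `d'` and exchanging sums, the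
flow equation `d' - γ d' P^{π'} = (1 - γ) ρ` turns this into `(1 - γ) ∑ ρ Δ`.
-/

open Finset

section

variable {S A 𝕜 : Type*} [Fintype S] [Fintype A] [CommRing 𝕜]

theorem sum_policy_advantage_eq_residual (γ : 𝕜) (w : A → 𝕜) (hw : ∑ a, w a = 1)
    (P : A → S → 𝕜) (R Q : A → 𝕜) (V V' : S → 𝕜) (s : S)
    (hQ : ∀ a, Q a = R a + γ * ∑ t, P a t * V t)
    (hV' : V' s = ∑ a, w a * (R a + γ * ∑ t, P a t * V' t)) :
    ∑ a, w a * (Q a - V s)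
      = (V' s - V s) - γ * ∑ a, w a * ∑ t, P a t * (V' t - V t) := by
  have hadv : ∑ a, w a * (Q a - V s)
      = ∑ a, w a * R a + γ * ∑ a, w a * ∑ t, P a t * V t - V s := by
    simp only [hQ, mul_sub, mul_add, sum_sub_distrib, sum_add_distrib, ← sum_mul, hw, one_mul,
      mul_left_comm _ γ, ← mul_sum]
  have hbellman : V' s = ∑ a, w a * R a + γ * ∑ a, w a * ∑ t, P a t * V' t := by
    rw [hV']
    simp only [mul_add, sum_add_distrib, mul_left_comm _ γ, ← mul_sum]
  have hdiff : ∑ a, w a * ∑ t, P a t * (V' t - V t)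
      = ∑ a, w a * ∑ t, P a t * V' t - ∑ a, w a * ∑ t, P a t * V t := by
    simp only [mul_sub, sum_sub_distrib]
  rw [hadv, hdiff, hbellman]
  ring

theorem sum_visitation_mul_transition (d : S → 𝕜) (π : S → A → 𝕜) (P : S → A → S → 𝕜)
    (f : S → 𝕜) :
    ∑ s, d s * ∑ a, π s a * ∑ t, P s a t * f t
      = ∑ t, (∑ s, ∑ a, d s * π s a * P s a t) * f t := by
  simp only [mul_sum, sum_mul, mul_assoc]
  exact (sum_congr rfl fun _ _ => sum_comm).trans sum_comm

theorem sum_visitation_mul_residual (γ : 𝕜) (ρ d : S → 𝕜) (π : S → A → 𝕜)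
    (P : S → A → S → 𝕜)
    (hd : ∀ t, d t - γ * ∑ s, ∑ a, d s * π s a * P s a t = (1 - γ) * ρ t) (f : S → 𝕜) :
    ∑ s, d s * (f s - γ * ∑ a, π s a * ∑ t, P s a t * f t)
      = (1 - γ) * ∑ t, ρ t * f t := by
  calc ∑ s, d s * (f s - γ * ∑ a, π s a * ∑ t, P s a t * f t)
      = ∑ t, d t * f t - γ * ∑ s, d s * ∑ a, π s a * ∑ t, P s a t * f t := by
        simp only [mul_sub, sum_sub_distrib, mul_left_comm (d _) γ, ← mul_sum]
    _ = ∑ t, (d t - γ * ∑ s, ∑ a, d s * π s a * P s a t) * f t := by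
        rw [sum_visitation_mul_transition, mul_sum, ← sum_sub_distrib]
        simp only [sub_mul, mul_assoc]
    _ = (1 - γ) * ∑ t, ρ t * f t := by
        rw [mul_sum]
        exact sum_congr rfl fun t _ => by rw [hd, mul_assoc]

end

theorem stmt_19_general {S A : Type*} [Fintype S] [Fintype A]
    (γ : ℝ) (hγ1 : γ < 1)
    (ρ : S → ℝ)
    (P : S → A → S → ℝ)
    (R : S → A → ℝ)
    (π' : S → A → ℝ)
    (hπ'1 : ∀ s, ∑ a, π' s a = 1)
    -- value functions of π and π'
    (V V' : S → ℝ)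
    (hV' : ∀ s, V' s = ∑ a, π' s a * (R s a + γ * ∑ s', P s a s' * V' s'))
    -- action-value function of π
    (Qf : S → A → ℝ)
    (hQ : ∀ s a, Qf s a = R s a + γ * ∑ s', P s a s' * V s')
    -- discounted visitation distribution of π'
    (d' : S → ℝ)
    (hd' : ∀ t, d' t - γ * ∑ s, ∑ a, d' s * π' s a * P s a t
      = (1 - γ) * ρ t) :
    (∑ s, ρ s * V' s) - ∑ s, ρ s * V s
      = (1 / (1 - γ)) * ∑ s, d' s * ∑ a, π' s a * (Qf s a - V s) := by
  have hγ : (1 : ℝ) - γ ≠ 0 := by linarith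
  have hres s := sum_policy_advantage_eq_residual γ (π' s) (hπ'1 s) (P s) (R s) (Qf s) V V' s
    (hQ s) (hV' s)
  rw [sum_congr rfl fun s _ => congrArg (d' s * ·) (hres s),
    sum_visitation_mul_residual γ ρ d' π' P hd', ← sum_sub_distrib]
  simp only [← mul_sub]
  field_simp

/-- Performance difference lemma (Kakade–Langford):
J_R(π') − J_R(π) = (1/(1-γ)) E_{s∼d^{π'}, a∼π'}[A_R^π(s,a)]. -/
theorem stmt_19 {S A : Type*} [Fintype S] [Fintype A]
    (γ : ℝ) (hγ0 : 0 < γ) (hγ1 : γ < 1)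
    (ρ : S → ℝ) (hρ0 : ∀ s, 0 ≤ ρ s) (hρ1 : ∑ s, ρ s = 1)
    (P : S → A → S → ℝ) (hP0 : ∀ s a s', 0 ≤ P s a s')
    (hP1 : ∀ s a, ∑ s', P s a s' = 1)
    (R : S → A → ℝ)
    (π π' : S → A → ℝ)
    (hπ0 : ∀ s a, 0 ≤ π s a) (hπ1 : ∀ s, ∑ a, π s a = 1)
    (hπ'0 : ∀ s a, 0 ≤ π' s a) (hπ'1 : ∀ s, ∑ a, π' s a = 1)
    -- value functions of π and π'
    (V V' : S → ℝ)
    (hV : ∀ s, V s = ∑ a, π s a * (R s a + γ * ∑ s', P s a s' * V s'))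
    (hV' : ∀ s, V' s = ∑ a, π' s a * (R s a + γ * ∑ s', P s a s' * V' s'))
    -- action-value function of π
    (Qf : S → A → ℝ)
    (hQ : ∀ s a, Qf s a = R s a + γ * ∑ s', P s a s' * V s')
    -- discounted visitation distribution of π'
    (d' : S → ℝ) (hd'0 : ∀ s, 0 ≤ d' s)
    (hd' : ∀ t, d' t - γ * ∑ s, ∑ a, d' s * π' s a * P s a t
      = (1 - γ) * ρ t) :
    (∑ s, ρ s * V' s) - ∑ s, ρ s * V s
      = (1 / (1 - γ)) * ∑ s, d' s * ∑ a, π' s a * (Qf s a - V s) :=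
  stmt_19_general γ hγ1 ρ P R π' hπ'1 V V' hV' Qf hQ d' hd'
end
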